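/- (Check or Issue Lemma) Let bx ∈ ℕ and let τ = {(s₀,s₁) ∈ ℕ×ℕ | s₀ = s₁ + 1 ∨ s₁ = bx}. For every path π (i.e., π: ℕ → ℕ with (π(i),π(i+1)) ∈ τ for all i ∈ ℕ) and all i,k ∈ ℕ with i ≤ k, either π(i) ≥ π(k), or there exists j ∈ ℕ with i < j, j ≤ k, and π(j) = bx. -/

import Mathlib

theorem path_eq_add_of_forall_ne_issue {bx : ℕ} {π : ℕ → ℕ}
    (hpath : ∀ i, π i = π (i + 1) + 1 ∨ π (i + 1) = bx) (i : ℕ) :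
    ∀ n, (∀ j, i < j → j ≤ i + n → π j ≠ bx) → π i = π (i + n) + n
  | 0, _ => rfl
  | n + 1, hno => by
    have hprev : π i = π (i + n) + n :=
      path_eq_add_of_forall_ne_issue hpath i n fun j hij hjn => hno j hij (by omega)
    have hstep : π (i + n) = π (i + n + 1) + 1 :=
      (hpath (i + n)).resolve_right (hno (i + n + 1) (by omega) le_rfl)
    rw [show i + (n + 1) = i + n + 1 from rfl]
    omega

/-- **Check or Issue Lemma.** For the Award Card Protocol state model with
`bx` boxes per card and transition relation
`τ = {(s₀, s₁) | s₀ = s₁ + 1 ∨ s₁ = bx}`: along any path `π`, for `i ≤ k`,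
either `π i ≥ π k` or some intermediate `j` with `i < j ≤ k` has
`π j = bx` (a new card was issued in between). -/
theorem check_or_issue (bx : ℕ) (π : ℕ → ℕ)
    (hpath : ∀ i : ℕ, (π i, π (i + 1)) ∈ { p : ℕ × ℕ | p.1 = p.2 + 1 ∨ p.2 = bx }) :
    ∀ i k : ℕ, i ≤ k →
      π i ≥ π k ∨ ∃ j : ℕ, i < j ∧ j ≤ k ∧ π j = bx := by
  intro i k hik
  by_cases hissue : ∃ j, i < j ∧ j ≤ k ∧ π j = bx
  · exact Or.inr hissue
  · push Not at hissue
    obtain ⟨n, rfl⟩ := Nat.exists_eq_add_of_le hik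
    have hcount := path_eq_add_of_forall_ne_issue hpath i n hissue
    exact Or.inl (by omega)
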